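/- arXiv:2602.08279 — 2 statements merged into one kernel-verified Lean document; each statement's English description precedes it below -/
import Mathlib

section
/- Every pure-form CMI K is equivalent to its canonical form: K ∼ can(K). -/
open scoped Classical

namespace Paper

variable {n : ℕ}

/-- The marginal distribution of the coordinates in `α` of a joint distribution `p` of
the discrete random variables `X_1, …, X_n` (each taking countably many values, coded
as natural numbers). -/
noncomputable def marginal (p : PMF (Fin n → ℕ)) (α : Finset (Fin n)) :
    PMF ({ i // i ∈ α } → ℕ) :=
  p.map fun x i => x i.1

/-- The Shannon (joint) entropy `H(X_α)`. -/
noncomputable def Hm (p : PMF (Fin n → ℕ)) (α : Finset (Fin n)) : ℝ :=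
  ∑' y, Real.negMulLog ((marginal p α) y).toReal

/-- The conditional entropy `H(X_β | X_α) = H(X_{β ∪ α}) - H(X_α)`. -/
noncomputable def Hc (p : PMF (Fin n → ℕ)) (β α : Finset (Fin n)) : ℝ :=
  Hm p (β ∪ α) - Hm p α

/-- Every individual random variable `X_i` has finite Shannon entropy
(the series defining `H(X_i)` is summable). -/
def FiniteEntropy (p : PMF (Fin n → ℕ)) : Prop :=
  ∀ i : Fin n, Summable fun y : ℕ => Real.negMulLog ((p.map fun x => x i) y).toReal

/-- `J(X_{Q_1}, …, X_{Q_k} | X_C) = (∑ i, H(X_{Q_i}|X_C)) - H(X_{Q_1},…,X_{Q_k}|X_C)`;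
the joint conditional entropy of the tuple `(X_{Q_1},…,X_{Q_k})` equals
`H(X_{∪ i, Q_i} | X_C)` since the two tuples determine each other. -/
noncomputable def J (p : PMF (Fin n → ℕ)) (C : Finset (Fin n))
    (Qs : Multiset (Finset (Fin n))) : ℝ :=
  (Qs.map fun Q => Hc p Q C).sum - Hc p Qs.sup C

/-- A conditional mutual independency (CMI) on `{1, …, n}`: a conditioning set `C`
together with a finite multiset `⟨Q_1, …, Q_k⟩` of subsets of `{1, …, n}`. -/
structure CMI (n : ℕ) where
  C : Finset (Fin n)
  Qs : Multiset (Finset (Fin n))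

/-- `K` is valid for the joint distribution `p`. -/
def Valid (p : PMF (Fin n → ℕ)) (K : CMI n) : Prop :=
  J p K.C K.Qs = 0

/-- `K` is degenerate: valid for every finite-entropy joint distribution. -/
def Degenerate (K : CMI n) : Prop :=
  ∀ p : PMF (Fin n → ℕ), FiniteEntropy p → Valid p K

/-- `K ∼ K'`: valid for exactly the same finite-entropy joint distributions. -/
def Equivalent (K K' : CMI n) : Prop :=
  ∀ p : PMF (Fin n → ℕ), FiniteEntropy p → (Valid p K ↔ Valid p K')

/-- `K` implies `K'`. -/
def Implies (K K' : CMI n) : Prop :=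
  ∀ p : PMF (Fin n → ℕ), FiniteEntropy p → Valid p K → Valid p K'

/-- `K` is in pure form: every `Q_i` is nonempty and disjoint from `C`. -/
def IsPure (K : CMI n) : Prop :=
  ∀ Q ∈ K.Qs, Q ≠ ∅ ∧ Q ∩ K.C = ∅

/-- The pure form `pur(K) = (C, ⟨Q_i \ C : Q_i \ C ≠ ∅⟩)`. -/
noncomputable def pur (K : CMI n) : CMI n :=
  ⟨K.C, (K.Qs.map fun Q => Q \ K.C).filter fun Q => Q ≠ ∅⟩

/-- The set `𝕀_K` of repeated indices of `K`: indices lying in `Q_i ∩ Q_j` for two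
distinct entries `i ≠ j` of the multiset (automatically `∅` when `k ≤ 1`). -/
noncomputable def repSet (K : CMI n) : Finset (Fin n) :=
  Finset.univ.filter fun q => 2 ≤ Multiset.card (K.Qs.filter fun Q => q ∈ Q)

/-- The multiset `⟨P_1, …, P_t⟩` of nonempty sets among the `Q_i \ 𝕀_K`. -/
noncomputable def parts (K : CMI n) : Multiset (Finset (Fin n)) :=
  (K.Qs.map fun Q => Q \ repSet K).filter fun P => P ≠ ∅

/-- The multiset of the `P_j`-entries of the canonical form `can(K)`
(general notation). -/
noncomputable def canParts (K : CMI n) : Multiset (Finset (Fin n)) :=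
  if Multiset.card K.Qs ≤ 1 then 0
  else if repSet K ≠ ∅ ∧ Multiset.card (parts K) ≤ 1 then 0
  else parts K

/-- The canonical form `can(K)` (of a pure-form CMI); all degenerate canonical forms
`(·,⟨⟩)` are represented by `⟨∅, 0⟩`. -/
noncomputable def can (K : CMI n) : CMI n :=
  if Multiset.card K.Qs ≤ 1 then ⟨∅, 0⟩
  else if repSet K = ∅ then ⟨K.C, parts K⟩
  else if Multiset.card (parts K) ≤ 1 then ⟨K.C, {repSet K, repSet K}⟩
  else ⟨K.C, repSet K ::ₘ repSet K ::ₘ parts K⟩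

/-- `R_K^{K'}`: the CMI "`K'` conditioning on `K`"; the degenerate case `(·,⟨⟩)` is
represented by `⟨∅, 0⟩`. -/
noncomputable def RCond (K K' : CMI n) : CMI n :=
  let I := repSet (pur K)
  let I' := repSet (pur K')
  let Ts := ((canParts (pur K')).map fun P => P \ I).filter fun T => T ≠ ∅
  if I' \ I = ∅ ∧ Multiset.card Ts ≤ 1 then ⟨∅, 0⟩
  else if I' \ I = ∅ then ⟨K'.C \ I, Ts⟩
  else if Multiset.card Ts ≤ 1 then ⟨K'.C \ I, {I' \ I, I' \ I}⟩
  else ⟨K'.C \ I, (I' \ I) ::ₘ (I' \ I) ::ₘ Ts⟩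



open scoped ENNReal
open ENNReal

noncomputable def negLog (t : ℝ≥0∞) : ℝ≥0∞ := ENNReal.ofReal (-Real.log t.toReal)

noncomputable def Ent {Y : Type*} (q : PMF Y) : ℝ≥0∞ := ∑' y, q y * negLog (q y)

open scoped ENNReal in
lemma negLog_le_add_div {a b : ℝ≥0∞} (ha : a ≠ 0) (ha' : a ≠ ∞) (hb : b ≠ 0) (hb' : b ≠ ∞) :
    negLog a ≤ negLog b + b / a := by
  have hat : 0 < a.toReal := ENNReal.toReal_pos ha ha'
  have hbt : 0 < b.toReal := ENNReal.toReal_pos hb hb'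
  have hdiv : (b / a).toReal = b.toReal / a.toReal := by
    rw [ENNReal.toReal_div]
  have hfin : b / a ≠ ∞ := (ENNReal.div_lt_top hb' ha).ne
  have key : -Real.log a.toReal ≤ -Real.log b.toReal + (b / a).toReal := by
    rw [hdiv]
    have h1 : Real.log (b.toReal / a.toReal) ≤ b.toReal / a.toReal - 1 :=
      Real.log_le_sub_one_of_pos (div_pos hbt hat)
    rw [Real.log_div (ne_of_gt hbt) (ne_of_gt hat)] at h1
    linarith
  calc negLog a ≤ ENNReal.ofReal (-Real.log b.toReal + (b / a).toReal) :=
        ENNReal.ofReal_le_ofReal key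
    _ ≤ ENNReal.ofReal (-Real.log b.toReal) + ENNReal.ofReal ((b / a).toReal) :=
        ENNReal.ofReal_add_le
    _ = negLog b + b / a := by rw [negLog, ENNReal.ofReal_toReal hfin]

lemma negLog_mul_le {a b : ℝ≥0∞} (ha' : a ≠ ∞) (hb' : b ≠ ∞) :
    negLog (a * b) ≤ negLog a + negLog b := by
  by_cases ha : a = 0
  · simp [ha, negLog]
  by_cases hb : b = 0
  · simp [hb, negLog]
  have ht : -Real.log ((a*b).toReal) = -Real.log a.toReal + -Real.log b.toReal := by
    rw [ENNReal.toReal_mul, Real.log_mul (ne_of_gt (ENNReal.toReal_pos ha ha'))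
      (ne_of_gt (ENNReal.toReal_pos hb hb'))]
    ring
  rw [negLog, ht]
  exact ENNReal.ofReal_add_le

lemma pullback {X Y : Type*} (q : PMF X) (f : X → Y) (g : Y → ℝ≥0∞) :
    ∑' y, (q.map f) y * g y = ∑' x, q x * g (f x) := by
  simp only [PMF.map_apply]
  calc ∑' y, (∑' x, if y = f x then q x else 0) * g y
      = ∑' y, ∑' x, (if y = f x then q x * g y else 0) := by
        congr 1; funext y
        rw [← ENNReal.tsum_mul_right]
        congr 1; funext x
        by_cases h : y = f x <;> simp [h]
    _ = ∑' x, ∑' y, (if y = f x then q x * g y else 0) := ENNReal.tsum_comm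
    _ = ∑' x, q x * g (f x) := by
        congr 1; funext x
        rw [tsum_eq_single (f x) (by intro y hy; simp [hy])]
        simp

lemma Ent_map_eq {X Y : Type*} (q : PMF X) (f : X → Y) :
    Ent (q.map f) = ∑' x, q x * negLog ((q.map f) (f x)) := pullback q f _

lemma le_map_apply {X Y : Type*} (q : PMF X) (f : X → Y) (x : X) :
    q x ≤ (q.map f) (f x) := by
  rw [PMF.map_apply]
  exact le_trans (by simp) (ENNReal.le_tsum x)

lemma map_apply_ne_zero {X Y : Type*} (q : PMF X) (f : X → Y) (x : X) (h : q x ≠ 0) :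
    (q.map f) (f x) ≠ 0 := by
  intro h0
  exact h (le_antisymm (h0 ▸ le_map_apply q f x) zero_le)

lemma Ent_pair_le {X Y : Type*} (q : PMF (X × Y)) :
    Ent q ≤ 1 + Ent (q.map Prod.fst) + Ent (q.map Prod.snd) := by
  set m1 := q.map Prod.fst
  set m2 := q.map Prod.snd
  have key : ∀ w : X × Y, q w * negLog (q w) ≤
      q w * (m1 w.1 * m2 w.2 / q w) + (q w * negLog (m1 w.1) + q w * negLog (m2 w.2)) := by
    intro w
    by_cases h : q w = 0
    · simp [h]
    have h1 : m1 w.1 ≠ 0 := map_apply_ne_zero q Prod.fst w h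
    have h2 : m2 w.2 ≠ 0 := map_apply_ne_zero q Prod.snd w h
    have h1' : m1 w.1 ≠ ∞ := PMF.apply_ne_top _ _
    have h2' : m2 w.2 ≠ ∞ := PMF.apply_ne_top _ _
    have step : negLog (q w) ≤ negLog (m1 w.1 * m2 w.2) + (m1 w.1 * m2 w.2) / q w :=
      negLog_le_add_div h (PMF.apply_ne_top _ _) (mul_ne_zero h1 h2) (ENNReal.mul_ne_top h1' h2')
    calc q w * negLog (q w) ≤ q w * (negLog (m1 w.1 * m2 w.2) + (m1 w.1 * m2 w.2) / q w) :=
          mul_le_mul_right step _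
      _ ≤ q w * (negLog (m1 w.1) + negLog (m2 w.2) + (m1 w.1 * m2 w.2) / q w) :=
          mul_le_mul_right (add_le_add_left (negLog_mul_le h1' h2') _) _
      _ = q w * (m1 w.1 * m2 w.2 / q w) + (q w * negLog (m1 w.1) + q w * negLog (m2 w.2)) := by
          ring
  calc Ent q ≤ ∑' w : X × Y, (q w * (m1 w.1 * m2 w.2 / q w) + (q w * negLog (m1 w.1) + q w * negLog (m2 w.2))) :=
        ENNReal.tsum_le_tsum key
    _ = (∑' w : X × Y, q w * (m1 w.1 * m2 w.2 / q w)) + ((∑' w : X × Y, q w * negLog (m1 w.1)) + (∑' w : X × Y, q w * negLog (m2 w.2))) := by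
        rw [ENNReal.tsum_add]; congr 1; rw [ENNReal.tsum_add]
    _ ≤ 1 + (Ent m1 + Ent m2) := by
        gcongr
        · calc ∑' w : X × Y, q w * (m1 w.1 * m2 w.2 / q w)
              ≤ ∑' w : X × Y, m1 w.1 * m2 w.2 := by
                apply ENNReal.tsum_le_tsum
                intro w
                by_cases h : q w = 0
                · simp [h]
                · rw [ENNReal.mul_div_cancel h (PMF.apply_ne_top _ _)]
            _ = (∑' x, m1 x) * (∑' y, m2 y) := by
                rw [ENNReal.tsum_prod (f := fun a b => m1 a * m2 b)]
                simp_rw [ENNReal.tsum_mul_left]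
                rw [← ENNReal.tsum_mul_right]
            _ = 1 := by rw [PMF.tsum_coe, PMF.tsum_coe, one_mul]
        · rw [Ent_map_eq q Prod.fst]
        · rw [Ent_map_eq q Prod.snd]
    _ = 1 + Ent m1 + Ent m2 := by ring

lemma negLog_anti {a b : ℝ≥0∞} (ha : a ≠ 0) (hab : a ≤ b) (hb : b ≠ ∞) :
    negLog b ≤ negLog a := by
  have haf : a ≠ ∞ := ne_top_of_le_ne_top hb hab
  have h0 : 0 < a.toReal := ENNReal.toReal_pos ha haf
  have h1 : a.toReal ≤ b.toReal := (ENNReal.toReal_le_toReal haf hb).2 hab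
  exact ENNReal.ofReal_le_ofReal (by
    have := Real.log_le_log h0 h1
    linarith)

lemma Ent_map_le {X Y : Type*} (q : PMF X) (f : X → Y) : Ent (q.map f) ≤ Ent q := by
  rw [Ent_map_eq]
  unfold Ent
  apply ENNReal.tsum_le_tsum
  intro x
  by_cases h : q x = 0
  · simp [h]
  · exact mul_le_mul_right (negLog_anti h (le_map_apply q f x) (PMF.apply_ne_top _ _)) _

lemma Ent_map_congr {X Y Y' : Type*} (q : PMF X) (f : X → Y) (f' : X → Y')
    (g : Y → Y') (g' : Y' → Y) (h : ∀ x, g (f x) = f' x) (h' : ∀ x, g' (f' x) = f x) :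
    Ent (q.map f) = Ent (q.map f') := by
  apply le_antisymm
  · have : q.map f = (q.map f').map g' := by
      rw [PMF.map_comp]; congr 1; funext x; simp [Function.comp, h']
    rw [this]; exact Ent_map_le _ _
  · have : q.map f' = (q.map f).map g := by
      rw [PMF.map_comp]; congr 1; funext x; simp [Function.comp, h]
    rw [this]; exact Ent_map_le _ _

lemma term_eq {Y : Type*} (q : PMF Y) (y : Y) :
    q y * negLog (q y) = ENNReal.ofReal (Real.negMulLog (q y).toReal) := by
  have h1 : q y = ENNReal.ofReal ((q y).toReal) := (ENNReal.ofReal_toReal (PMF.apply_ne_top q y)).symm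
  rw [Real.negMulLog]
  rw [show -(q y).toReal * Real.log (q y).toReal = (q y).toReal * (-Real.log (q y).toReal) by ring]
  rw [ENNReal.ofReal_mul ENNReal.toReal_nonneg]
  rw [negLog]
  congr 1

lemma toReal_le_one {Y : Type*} (q : PMF Y) (y : Y) : (q y).toReal ≤ 1 :=
  ENNReal.toReal_le_of_le_ofReal zero_le_one (by simpa using PMF.coe_le_one q y)

lemma Ent_eq_ofReal_tsum {Y : Type*} (q : PMF Y)
    (h : Summable fun y => Real.negMulLog ((q y).toReal)) :
    Ent q = ENNReal.ofReal (∑' y, Real.negMulLog (q y).toReal) := by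
  rw [ENNReal.ofReal_tsum_of_nonneg (fun y => Real.negMulLog_nonneg ENNReal.toReal_nonneg (toReal_le_one q y)) h]
  unfold Ent
  congr 1; funext y; exact term_eq q y

lemma toReal_Ent {Y : Type*} (q : PMF Y) :
    (Ent q).toReal = ∑' y, Real.negMulLog (q y).toReal := by
  unfold Ent
  rw [ENNReal.tsum_toReal_eq (f := fun y => q y * negLog (q y)) (fun y => ENNReal.mul_ne_top (PMF.apply_ne_top q y) ofReal_ne_top)]
  congr 1; funext y
  rw [term_eq]
  rw [ENNReal.toReal_ofReal]
  exact Real.negMulLog_nonneg ENNReal.toReal_nonneg (toReal_le_one q y)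

lemma aux_mul_div (a b c : ℝ≥0∞) (ha' : a ≠ ∞) : a * (b / (a * c)) ≤ b / c := by
  by_cases ha : a = 0
  · simp [ha]
  rw [div_eq_mul_inv b (a*c), ENNReal.mul_inv (Or.inl ha) (Or.inl ha')]
  calc a * (b * (a⁻¹ * c⁻¹)) = (a * a⁻¹) * (b * c⁻¹) := by ring
    _ ≤ 1 * (b * c⁻¹) := by gcongr; exact ENNReal.mul_inv_le_one a
    _ = b / c := by rw [one_mul, div_eq_mul_inv]

lemma aux_mul_div_eq (a b c : ℝ≥0∞) (ha : a ≠ 0) (ha' : a ≠ ∞) : a * (b / (a * c)) = b / c := by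
  rw [div_eq_mul_inv b (a*c), ENNReal.mul_inv (Or.inl ha) (Or.inl ha')]
  calc a * (b * (a⁻¹ * c⁻¹)) = (a * a⁻¹) * (b * c⁻¹) := by ring
    _ = 1 * (b * c⁻¹) := by rw [ENNReal.mul_inv_cancel ha ha']
    _ = b / c := by rw [one_mul, div_eq_mul_inv]

lemma tsum_fiber {X Y : Type*} (m : PMF (X × Y)) (z : Y) :
    ∑' x, m (x, z) = (m.map Prod.snd) z := by
  rw [PMF.map_apply]
  calc ∑' x, m (x, z) = ∑' x, ∑' y, (if z = y then m (x, y) else 0) := by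
        congr 1; funext x
        rw [tsum_eq_single z (fun b hb => if_neg (fun h => hb h.symm))]
        simp
    _ = ∑' (p : X × Y), (if z = p.2 then m (p.1, p.2) else 0) := (ENNReal.tsum_prod (f := fun x y => if z = y then m (x,y) else 0)).symm
    _ = ∑' (p : X × Y), (if z = p.2 then m p else 0) := by
        congr 1

section Submod
variable {X Y Z : Type*} (q : PMF (X × Y × Z))

lemma group_le_one : ∑' w : X × Y × Z,
    q w * ((q.map fun w => (w.1, w.2.2)) (w.1, w.2.2) * (q.map fun w => w.2) w.2
      / (q w * (q.map fun w => w.2.2) w.2.2)) ≤ 1 := by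
  set m13 := q.map fun w : X × Y × Z => (w.1, w.2.2) with hm13
  set m23 := q.map fun w : X × Y × Z => w.2 with hm23
  set m3 := q.map fun w : X × Y × Z => w.2.2 with hm3
  have hm3fiber : ∀ z, ∑' x, m13 (x, z) = m3 z := by
    intro z
    rw [tsum_fiber m13 z, hm13, PMF.map_comp]
    rfl
  calc ∑' w : X × Y × Z, q w * (m13 (w.1, w.2.2) * m23 w.2 / (q w * m3 w.2.2))
      ≤ ∑' w : X × Y × Z, m13 (w.1, w.2.2) * m23 w.2 / m3 w.2.2 :=
        ENNReal.tsum_le_tsum (fun w => aux_mul_div _ _ _ (PMF.apply_ne_top q w))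
    _ = ∑' (x : X) (p : Y × Z), m13 (x, p.2) * m23 p / m3 p.2 :=
        ENNReal.tsum_prod (f := fun x p => m13 (x, p.2) * m23 p / m3 p.2)
    _ = ∑' (p : Y × Z) (x : X), m13 (x, p.2) * m23 p / m3 p.2 := ENNReal.tsum_comm
    _ = ∑' (p : Y × Z), m3 p.2 * (m23 p / m3 p.2) := by
        congr 1; funext p
        calc ∑' x, m13 (x, p.2) * m23 p / m3 p.2
            = ∑' x, m13 (x, p.2) * (m23 p / m3 p.2) := by
              congr 1; funext x; rw [mul_div_assoc]
          _ = (∑' x, m13 (x, p.2)) * (m23 p / m3 p.2) := ENNReal.tsum_mul_right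
          _ = m3 p.2 * (m23 p / m3 p.2) := by rw [hm3fiber]
    _ ≤ ∑' (p : Y × Z), m23 p := ENNReal.tsum_le_tsum (fun p => ENNReal.mul_div_le)
    _ = 1 := PMF.tsum_coe m23

end Submod

lemma pull_real {X Y : Type*} (q : PMF X) (f : X → Y) (hfin : Ent (q.map f) ≠ ∞) :
    Summable (fun x => (q x).toReal * (-Real.log (((q.map f) (f x))).toReal)) ∧
    (Ent (q.map f)).toReal = ∑' x, (q x).toReal * (-Real.log (((q.map f) (f x))).toReal) := by
  have hrw : ∀ x, (q x * negLog ((q.map f) (f x))).toReal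
      = (q x).toReal * (-Real.log (((q.map f) (f x))).toReal) := by
    intro x
    rw [ENNReal.toReal_mul, negLog, ENNReal.toReal_ofReal]
    have h1 : ((q.map f) (f x)).toReal ≤ 1 := toReal_le_one _ _
    have := Real.log_nonpos ENNReal.toReal_nonneg h1
    linarith
  have hfin' : ∑' x, q x * negLog ((q.map f) (f x)) ≠ ∞ := by
    rw [← Ent_map_eq]; exact hfin
  constructor
  · have := ENNReal.summable_toReal hfin'
    simpa only [hrw] using this
  · rw [Ent_map_eq, ENNReal.tsum_toReal_eq (f := fun x => q x * negLog ((q.map f) (f x)))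
      (fun x => ENNReal.mul_ne_top (PMF.apply_ne_top q x) ofReal_ne_top)]
    exact tsum_congr hrw

lemma Ent_eq_Ent_map_id {X : Type*} (q : PMF X) : Ent q = Ent (q.map id) := by
  rw [PMF.map_id]

lemma Ent_submod {X Y Z : Type*} (q : PMF (X × Y × Z)) :
    Ent q + Ent (q.map fun w => w.2.2) ≤
      Ent (q.map fun w => (w.1, w.2.2)) + Ent (q.map fun w => w.2) := by
  set m13 := q.map fun w : X × Y × Z => (w.1, w.2.2) with hm13
  set m23 := q.map fun w : X × Y × Z => w.2 with hm23
  set m3 := q.map fun w : X × Y × Z => w.2.2 with hm3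
  by_cases h13 : Ent m13 = ∞
  · rw [h13]; simp [top_add]
  by_cases h23 : Ent m23 = ∞
  · rw [h23]; simp
  -- finiteness of Ent m3
  have hm3eq : m3 = m23.map Prod.snd := by rw [hm23, PMF.map_comp]; rfl
  have h3 : Ent m3 ≠ ∞ := by
    rw [hm3eq]
    exact fun h => h23 (top_le_iff.1 (h ▸ Ent_map_le m23 Prod.snd))
  -- finiteness of Ent q
  have hqfin : Ent q ≠ ∞ := by
    have hcongr : Ent q = Ent (q.map fun w : X × Y × Z => ((w.1, w.2.2), w.2)) := by
      rw [Ent_eq_Ent_map_id q]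
      exact Ent_map_congr q id _ (fun w => ((w.1, w.2.2), w.2)) (fun v => (v.1.1, v.2))
        (fun x => rfl) (fun x => rfl)
    have hle := Ent_pair_le (q.map fun w : X × Y × Z => ((w.1, w.2.2), w.2))
    rw [PMF.map_comp, PMF.map_comp] at hle
    have hfst : ((fun v : (X × Z) × (Y × Z) => v.1) ∘ fun w : X × Y × Z => ((w.1, w.2.2), w.2))
        = fun w : X × Y × Z => (w.1, w.2.2) := rfl
    have hsnd : ((fun v : (X × Z) × (Y × Z) => v.2) ∘ fun w : X × Y × Z => ((w.1, w.2.2), w.2))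
        = fun w : X × Y × Z => w.2 := rfl
    rw [hfst, hsnd] at hle
    rw [hcongr]
    intro h
    rw [h] at hle
    have : (1 : ℝ≥0∞) + Ent m13 + Ent m23 ≠ ∞ := by
      simp [ENNReal.add_ne_top, h13, h23]
    exact this (top_le_iff.1 hle)
  -- real part
  obtain ⟨hA, eA⟩ := pull_real q (fun w : X × Y × Z => (w.1, w.2.2)) h13
  obtain ⟨hB, eB⟩ := pull_real q (fun w : X × Y × Z => w.2) h23
  obtain ⟨hC, eC⟩ := pull_real q (fun w : X × Y × Z => w.2.2) h3
  obtain ⟨hR, eR⟩ := pull_real q id (by rw [PMF.map_id]; exact hqfin)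
  simp only [PMF.map_id, id_eq] at hR eR
  -- the correction term
  set kE : X × Y × Z → ℝ≥0∞ := fun w =>
    q w * (m13 (w.1, w.2.2) * m23 w.2 / (q w * m3 w.2.2)) with hkE
  have hk1 : ∑' w, kE w ≤ 1 := group_le_one q
  have hkwfin : ∀ w, kE w ≠ ∞ := fun w =>
    ne_top_of_le_ne_top (ne_top_of_le_ne_top ENNReal.one_ne_top hk1) (ENNReal.le_tsum w)
  have hksum : Summable (fun w => (kE w).toReal) :=
    ENNReal.summable_toReal (ne_top_of_le_ne_top ENNReal.one_ne_top hk1)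
  have hktsum : ∑' w, (kE w).toReal ≤ 1 := by
    rw [← ENNReal.tsum_toReal_eq hkwfin]
    calc (∑' w, kE w).toReal ≤ (1 : ℝ≥0∞).toReal :=
      ENNReal.toReal_mono ENNReal.one_ne_top hk1
    _ = 1 := ENNReal.toReal_one
  have hRsum : Summable (fun w : X × Y × Z => (q w).toReal) :=
    ENNReal.summable_toReal (by rw [PMF.tsum_coe]; exact ENNReal.one_ne_top)
  have hRtsum : ∑' w : X × Y × Z, (q w).toReal = 1 := by
    rw [← ENNReal.tsum_toReal_eq (fun w => PMF.apply_ne_top q w), PMF.tsum_coe,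
      ENNReal.toReal_one]
  -- pointwise inequality
  have hpt : ∀ w : X × Y × Z, (q w).toReal - (kE w).toReal ≤
      ((q w).toReal * (-Real.log ((m13 (w.1, w.2.2)).toReal))
        + (q w).toReal * (-Real.log ((m23 w.2).toReal)))
      - ((q w).toReal * (-Real.log ((q w).toReal))
        + (q w).toReal * (-Real.log ((m3 w.2.2).toReal))) := by
    intro w
    by_cases h0 : q w = 0
    · simp [hkE, h0]
    have hqt : 0 < (q w).toReal := ENNReal.toReal_pos h0 (PMF.apply_ne_top q w)
    have hAle : q w ≤ m13 (w.1, w.2.2) := le_map_apply q _ w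
    have hBle : q w ≤ m23 w.2 := le_map_apply q (fun w : X × Y × Z => w.2) w
    have hCle : q w ≤ m3 w.2.2 := le_map_apply q (fun w : X × Y × Z => w.2.2) w
    have hAt : 0 < (m13 (w.1, w.2.2)).toReal :=
      ENNReal.toReal_pos (fun h => h0 (le_antisymm (h ▸ hAle) zero_le)) (PMF.apply_ne_top _ _)
    have hBt : 0 < (m23 w.2).toReal :=
      ENNReal.toReal_pos (fun h => h0 (le_antisymm (h ▸ hBle) zero_le)) (PMF.apply_ne_top _ _)
    have hCt : 0 < (m3 w.2.2).toReal :=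
      ENNReal.toReal_pos (fun h => h0 (le_antisymm (h ▸ hCle) zero_le)) (PMF.apply_ne_top _ _)
    set r := (q w).toReal
    set a := (m13 (w.1, w.2.2)).toReal
    set b := (m23 w.2).toReal
    set c := (m3 w.2.2).toReal
    have hkeq : (kE w).toReal = a * b / c := by
      rw [hkE]
      simp only
      rw [aux_mul_div_eq (q w) _ _ h0 (PMF.apply_ne_top q w)]
      rw [ENNReal.toReal_div, ENNReal.toReal_mul]
    rw [hkeq]
    -- log inequality with s = a*b/(r*c)
    have hs : 0 < a * b / (r * c) := by positivity
    have hlog := Real.log_le_sub_one_of_pos hs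
    have hlogeq : Real.log (a * b / (r * c)) = Real.log a + Real.log b - Real.log r - Real.log c := by
      rw [Real.log_div (by positivity) (by positivity), Real.log_mul (ne_of_gt hAt) (ne_of_gt hBt),
        Real.log_mul (ne_of_gt hqt) (ne_of_gt hCt)]
      ring
    rw [hlogeq] at hlog
    have hrs : r * (a * b / (r * c)) = a * b / c := by
      field_simp
    nlinarith [mul_le_mul_of_nonneg_left hlog (le_of_lt hqt)]
  -- assemble
  rw [← ENNReal.toReal_le_toReal (ENNReal.add_ne_top.2 ⟨hqfin, h3⟩) (ENNReal.add_ne_top.2 ⟨h13, h23⟩)]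
  rw [ENNReal.toReal_add hqfin h3, ENNReal.toReal_add h13 h23]
  rw [eA, eB, eC, eR]
  have hsum1 : Summable (fun w : X × Y × Z => (q w).toReal - (kE w).toReal) := hRsum.sub hksum
  have hsum2 : Summable (fun w : X × Y × Z =>
      ((q w).toReal * (-Real.log ((m13 (w.1, w.2.2)).toReal))
        + (q w).toReal * (-Real.log ((m23 w.2).toReal)))
      - ((q w).toReal * (-Real.log ((q w).toReal))
        + (q w).toReal * (-Real.log ((m3 w.2.2).toReal)))) := (hA.add hB).sub (hR.add hC)
  have hbig := hsum1.tsum_le_tsum hpt hsum2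
  rw [hRsum.tsum_sub hksum, hRtsum] at hbig
  rw [(hA.add hB).tsum_sub (hR.add hC), hA.tsum_add hB, hR.tsum_add hC] at hbig
  linarith

section PaperLayer
open scoped ENNReal
open ENNReal

variable (p : PMF (Fin n → ℕ))

lemma marginal_eq (α : Finset (Fin n)) :
    marginal p α = p.map (fun x (i : {i // i ∈ α}) => x i.1) := rfl

lemma Hm_eq (α : Finset (Fin n)) : Hm p α = (Ent (marginal p α)).toReal :=
  (toReal_Ent _).symm

lemma EntM_mono {α β : Finset (Fin n)} (h : α ⊆ β) :
    Ent (marginal p α) ≤ Ent (marginal p β) := by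
  have : marginal p α = (marginal p β).map
      (fun (y : {i // i ∈ β} → ℕ) (i : {i // i ∈ α}) => y ⟨i.1, h i.2⟩) := by
    rw [marginal_eq, marginal_eq, PMF.map_comp]
    rfl
  rw [this]
  exact Ent_map_le _ _

lemma Ent_subsingleton {Y : Type*} [Subsingleton Y] (q : PMF Y) : Ent q = 0 := by
  have key : ∀ y : Y, q y = 1 := by
    intro y
    have := PMF.tsum_coe q
    rwa [tsum_eq_single y (fun b hb => absurd (Subsingleton.elim b y) hb)] at this
  unfold Ent
  have : ∀ y : Y, q y * negLog (q y) = 0 := by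
    intro y
    rw [key y, negLog]
    simp
  simp [this]

lemma EntM_ne_top (hp : FiniteEntropy p) (α : Finset (Fin n)) :
    Ent (marginal p α) ≠ ∞ := by
  induction α using Finset.induction_on with
  | empty =>
      have : Subsingleton ({i // i ∈ (∅ : Finset (Fin n))} → ℕ) := by
        have : IsEmpty {i // i ∈ (∅ : Finset (Fin n))} :=
          ⟨fun x => absurd x.2 (Finset.notMem_empty _)⟩
        infer_instance
      rw [Ent_subsingleton]
      exact ENNReal.zero_ne_top
  | @insert i s hi ih =>
      have hcongr : Ent (marginal p (insert i s)) =
          Ent (p.map fun x => (x i, fun j : {j // j ∈ s} => x j.1)) := by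
        rw [marginal_eq]
        refine Ent_map_congr p _ _
          (fun y => (y ⟨i, Finset.mem_insert_self i s⟩,
            fun j => y ⟨j.1, Finset.mem_insert_of_mem j.2⟩))
          (fun v j => if h : j.1 = i then v.1 else
            v.2 ⟨j.1, (Finset.mem_insert.1 j.2).resolve_left h⟩)
          (fun x => rfl) ?_
        intro x
        funext j
        rcases j with ⟨jv, hj⟩
        by_cases h : jv = i
        · subst h; simp
        · simp [h]
      rw [hcongr]
      have hle := Ent_pair_le (p.map fun x => (x i, fun j : {j // j ∈ s} => x j.1))
      rw [PMF.map_comp, PMF.map_comp] at hle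
      have h1 : (Prod.fst ∘ fun x : Fin n → ℕ => (x i, fun j : {j // j ∈ s} => x j.1))
          = fun x => x i := rfl
      have h2 : (Prod.snd ∘ fun x : Fin n → ℕ => (x i, fun j : {j // j ∈ s} => x j.1))
          = fun x (j : {j // j ∈ s}) => x j.1 := rfl
      rw [h1, h2] at hle
      have hfin1 : Ent (p.map fun x => x i) ≠ ∞ := by
        rw [Ent_eq_ofReal_tsum _ (hp i)]
        exact ENNReal.ofReal_ne_top
      intro htop
      rw [htop] at hle
      exact (by simp [ENNReal.add_ne_top, hfin1, ih] : (1 : ℝ≥0∞) + Ent (p.map fun x => x i)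
        + Ent (marginal p s) ≠ ∞) (top_le_iff.1 hle)

end PaperLayer

section PaperLayer2
open scoped ENNReal
open ENNReal

variable (p : PMF (Fin n → ℕ))

lemma mem_inter_of_not_sdiffs {α β : Finset (Fin n)} {j : Fin n} (hj : j ∈ α ∪ β)
    (h1 : j ∉ α \ β) (h2 : j ∉ β \ α) : j ∈ α ∩ β := by
  rcases Finset.mem_union.1 hj with h | h <;>
    simp only [Finset.mem_sdiff, Finset.mem_inter, not_and, not_not] at h1 h2 ⊢ <;> tauto

lemma mem_inter_of_mem_left {α β : Finset (Fin n)} {j : Fin n} (hj : j ∈ α) (h1 : j ∉ α \ β) :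
    j ∈ α ∩ β := by
  simp only [Finset.mem_sdiff, Finset.mem_inter, not_and, not_not] at h1 ⊢; tauto

lemma mem_inter_of_mem_right {α β : Finset (Fin n)} {j : Fin n} (hj : j ∈ β) (h1 : j ∉ β \ α) :
    j ∈ α ∩ β := by
  simp only [Finset.mem_sdiff, Finset.mem_inter, not_and, not_not] at h1 ⊢; tauto

lemma EntM_submod (α β : Finset (Fin n)) :
    Ent (marginal p (α ∪ β)) + Ent (marginal p (α ∩ β)) ≤
      Ent (marginal p α) + Ent (marginal p β) := by
  classical
  set Φ : (Fin n → ℕ) →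
      ({i // i ∈ α \ β} → ℕ) × ({i // i ∈ β \ α} → ℕ) × ({i // i ∈ α ∩ β} → ℕ) :=
    fun x => (fun j => x j.1, fun j => x j.1, fun j => x j.1) with hΦ
  have e3 : marginal p (α ∩ β) = (p.map Φ).map (fun w => w.2.2) := by
    rw [PMF.map_comp]; rfl
  have e13 : Ent (marginal p α) = Ent ((p.map Φ).map (fun w => (w.1, w.2.2))) := by
    rw [PMF.map_comp, marginal_eq]
    refine Ent_map_congr p _ _
      (fun y => (fun j => y ⟨j.1, (Finset.mem_sdiff.1 j.2).1⟩,
        fun j => y ⟨j.1, (Finset.mem_inter.1 j.2).1⟩))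
      (fun v j => if h : j.1 ∈ α \ β then v.1 ⟨j.1, h⟩
        else v.2 ⟨j.1, mem_inter_of_mem_left j.2 h⟩)
      (fun x => rfl) ?_
    intro x
    funext j
    dsimp only [Function.comp]
    by_cases h : j.1 ∈ α \ β
    · rw [dif_pos h]
    · rw [dif_neg h]
  have e23 : Ent (marginal p β) = Ent ((p.map Φ).map (fun w => w.2)) := by
    rw [PMF.map_comp, marginal_eq]
    refine Ent_map_congr p _ _
      (fun y => (fun j => y ⟨j.1, (Finset.mem_sdiff.1 j.2).1⟩,
        fun j => y ⟨j.1, (Finset.mem_inter.1 j.2).2⟩))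
      (fun v j => if h : j.1 ∈ β \ α then v.1 ⟨j.1, h⟩
        else v.2 ⟨j.1, mem_inter_of_mem_right j.2 h⟩)
      (fun x => rfl) ?_
    intro x
    funext j
    dsimp only [Function.comp]
    by_cases h : j.1 ∈ β \ α
    · rw [dif_pos h]
    · rw [dif_neg h]
  have eU : Ent (marginal p (α ∪ β)) = Ent (p.map Φ) := by
    rw [marginal_eq]
    refine Ent_map_congr p _ Φ
      (fun y => (fun j => y ⟨j.1, Finset.mem_union_left _ (Finset.mem_sdiff.1 j.2).1⟩,
        fun j => y ⟨j.1, Finset.mem_union_right _ (Finset.mem_sdiff.1 j.2).1⟩,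
        fun j => y ⟨j.1, Finset.mem_union_left _ (Finset.mem_inter.1 j.2).1⟩))
      (fun v j => if h1 : j.1 ∈ α \ β then v.1 ⟨j.1, h1⟩
        else if h2 : j.1 ∈ β \ α then v.2.1 ⟨j.1, h2⟩
        else v.2.2 ⟨j.1, mem_inter_of_not_sdiffs j.2 h1 h2⟩)
      (fun x => rfl) ?_
    intro x
    funext j
    by_cases h1 : j.1 ∈ α \ β
    · rw [dif_pos h1]
    · rw [dif_neg h1]
      by_cases h2 : j.1 ∈ β \ α
      · rw [dif_pos h2]
      · rw [dif_neg h2]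
  rw [eU, e13, e23, e3]
  exact Ent_submod (p.map Φ)

lemma Hm_mono (hp : FiniteEntropy p) {α β : Finset (Fin n)} (h : α ⊆ β) :
    Hm p α ≤ Hm p β := by
  rw [Hm_eq, Hm_eq]
  exact (ENNReal.toReal_le_toReal (EntM_ne_top p hp α) (EntM_ne_top p hp β)).2 (EntM_mono p h)

lemma Hm_submod (hp : FiniteEntropy p) (α β : Finset (Fin n)) :
    Hm p (α ∪ β) + Hm p (α ∩ β) ≤ Hm p α + Hm p β := by
  have h := EntM_submod p α β
  have h' := (ENNReal.toReal_le_toReal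
    (ENNReal.add_ne_top.2 ⟨EntM_ne_top p hp _, EntM_ne_top p hp _⟩)
    (ENNReal.add_ne_top.2 ⟨EntM_ne_top p hp _, EntM_ne_top p hp _⟩)).2 h
  rw [ENNReal.toReal_add (EntM_ne_top p hp _) (EntM_ne_top p hp _),
    ENNReal.toReal_add (EntM_ne_top p hp _) (EntM_ne_top p hp _)] at h'
  simpa [Hm_eq] using h'

end PaperLayer2

section PaperLayer3

variable (p : PMF (Fin n → ℕ))

lemma Hc_nonneg (hp : FiniteEntropy p) (Q C : Finset (Fin n)) : 0 ≤ Hc p Q C :=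
  sub_nonneg.2 (Hm_mono p hp Finset.subset_union_right)

lemma Hc_empty (C : Finset (Fin n)) : Hc p ∅ C = 0 := by
  unfold Hc; rw [Finset.empty_union]; ring

lemma Hc_union_le (hp : FiniteEntropy p) (Q S C : Finset (Fin n)) :
    Hc p (Q ∪ S) C ≤ Hc p Q C + Hc p S C := by
  have hsub := Hm_submod p hp (Q ∪ C) (S ∪ C)
  have h1 : (Q ∪ C) ∪ (S ∪ C) = (Q ∪ S) ∪ C := by
    ext x; simp only [Finset.mem_union]; tauto
  have h2 : Hm p C ≤ Hm p ((Q ∪ C) ∩ (S ∪ C)) :=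
    Hm_mono p hp (Finset.subset_inter Finset.subset_union_right Finset.subset_union_right)
  rw [h1] at hsub
  unfold Hc
  linarith

lemma cond_reduce (hp : FiniteEntropy p) {S T : Finset (Fin n)} (A : Finset (Fin n))
    (h : S ⊆ T) : Hm p (A ∪ T) - Hm p T ≤ Hm p (A ∪ S) - Hm p S := by
  have hsub := Hm_submod p hp (A ∪ S) T
  have h1 : (A ∪ S) ∪ T = A ∪ T := by
    ext x; have hx := @h x; simp only [Finset.mem_union]; tauto
  have h2 : Hm p S ≤ Hm p ((A ∪ S) ∩ T) :=
    Hm_mono p hp (Finset.subset_inter Finset.subset_union_right h)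
  rw [h1] at hsub
  linarith

lemma shrink (hp : FiniteEntropy p) {A Q : Finset (Fin n)} (B C : Finset (Fin n))
    (hA : A ⊆ Q) : Hc p (Q ∪ B) C - Hc p Q C ≤ Hc p (A ∪ B) C - Hc p A C := by
  have h := cond_reduce p hp (S := A ∪ C) (T := Q ∪ C) B
    (Finset.union_subset_union_left hA)
  have h1 : B ∪ (Q ∪ C) = (Q ∪ B) ∪ C := by
    ext x; simp only [Finset.mem_union]; tauto
  have h2 : B ∪ (A ∪ C) = (A ∪ B) ∪ C := by
    ext x; simp only [Finset.mem_union]; tauto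
  rw [h1, h2] at h
  unfold Hc
  linarith

lemma J_zero_of_card_le_one {C : Finset (Fin n)} {Qs : Multiset (Finset (Fin n))}
    (h : Multiset.card Qs ≤ 1) : J p C Qs = 0 := by
  interval_cases hcard : Multiset.card Qs
  · rw [Multiset.card_eq_zero.1 hcard]
    unfold J
    simp [Hc_empty]
  · obtain ⟨Q, rfl⟩ := Multiset.card_eq_one.1 hcard
    unfold J
    simp

lemma J_cons (C Q : Finset (Fin n)) (Qs : Multiset (Finset (Fin n))) :
    J p C (Q ::ₘ Qs) = J p C Qs + (Hc p Q C + Hc p Qs.sup C - Hc p (Q ∪ Qs.sup) C) := by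
  unfold J
  rw [Multiset.map_cons, Multiset.sum_cons, Multiset.sup_cons, Finset.sup_eq_union]
  ring

lemma J_nonneg (hp : FiniteEntropy p) (C : Finset (Fin n)) (Qs : Multiset (Finset (Fin n))) :
    0 ≤ J p C Qs := by
  induction Qs using Multiset.induction_on with
  | empty => rw [J_zero_of_card_le_one p (by simp)]
  | cons Q Qs ih =>
      rw [J_cons]
      have := Hc_union_le p hp Q Qs.sup C
      linarith

lemma sup_add (A B : Multiset (Finset (Fin n))) : (A + B).sup = A.sup ∪ B.sup := by
  rw [Multiset.sup_add]
  rfl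

lemma J_superadd (hp : FiniteEntropy p) (C : Finset (Fin n))
    (A B : Multiset (Finset (Fin n))) : J p C A + J p C B ≤ J p C (A + B) := by
  unfold J
  rw [Multiset.map_add, Multiset.sum_add, sup_add]
  have := Hc_union_le p hp A.sup B.sup C
  linarith

lemma J_pair (C Q1 Q2 : Finset (Fin n)) :
    J p C (Q1 ::ₘ Q2 ::ₘ 0) = Hc p Q1 C + Hc p Q2 C - Hc p (Q1 ∪ Q2) C := by
  unfold J
  simp only [Multiset.map_cons, Multiset.map_zero, Multiset.sum_cons, Multiset.sum_zero,
    Multiset.sup_cons, Multiset.sup_zero]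
  rw [show Q1 ⊔ (Q2 ⊔ ⊥) = Q1 ∪ Q2 by rw [Finset.sup_eq_union]; simp]
  ring

lemma Hc_singleton_le_J_pair (hp : FiniteEntropy p) {C Q1 Q2 : Finset (Fin n)} {q : Fin n}
    (h1 : q ∈ Q1) (h2 : q ∈ Q2) :
    Hc p {q} C ≤ Hc p Q1 C + Hc p Q2 C - Hc p (Q1 ∪ Q2) C := by
  have s1 := shrink p hp Q2 C (Finset.singleton_subset_iff.2 h1)
  have s2 := shrink p hp {q} C (Finset.singleton_subset_iff.2 h2)
  have e1 : ({q} : Finset (Fin n)) ∪ Q2 = Q2 ∪ {q} := Finset.union_comm _ _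
  have e2 : ({q} : Finset (Fin n)) ∪ {q} = {q} := Finset.union_self _
  rw [e2] at s2
  rw [e1] at s1
  linarith

lemma two_entry_zero (hp : FiniteEntropy p) {C Q1 Q2 : Finset (Fin n)}
    {rest : Multiset (Finset (Fin n))} {q : Fin n} (h1 : q ∈ Q1) (h2 : q ∈ Q2)
    (hJ : J p C (Q1 ::ₘ Q2 ::ₘ rest) = 0) : Hc p {q} C = 0 := by
  have hsplit : Q1 ::ₘ Q2 ::ₘ rest = (Q1 ::ₘ Q2 ::ₘ 0) + rest := by
    simp [Multiset.cons_add]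
  have hge := J_superadd p hp C (Q1 ::ₘ Q2 ::ₘ 0) rest
  rw [← hsplit, hJ] at hge
  have hr := J_nonneg p hp C rest
  have hpair := J_pair p C Q1 Q2
  have hq := Hc_singleton_le_J_pair p hp (C := C) h1 h2
  have hq0 := Hc_nonneg p hp {q} C
  linarith

lemma Hc_finset_zero (hp : FiniteEntropy p) {C I : Finset (Fin n)}
    (h : ∀ q ∈ I, Hc p {q} C = 0) : Hc p I C = 0 := by
  induction I using Finset.induction_on with
  | empty => exact Hc_empty p C
  | @insert q s hq ih =>
      have : insert q s = {q} ∪ s := Finset.insert_eq q s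
      rw [this]
      have hle := Hc_union_le p hp {q} s C
      have h1 : Hc p {q} C = 0 := h q (Finset.mem_insert_self q s)
      have h2 : Hc p s C = 0 := ih (fun r hr => h r (Finset.mem_insert_of_mem hr))
      have h3 := Hc_nonneg p hp ({q} ∪ s) C
      linarith

lemma Hm_erase (hp : FiniteEntropy p) {I C : Finset (Fin n)} (hI : Hc p I C = 0)
    (A : Finset (Fin n)) : Hm p (A ∪ I ∪ C) = Hm p (A ∪ C) := by
  have hle := cond_reduce p hp (S := C) (T := A ∪ C) I Finset.subset_union_right
  have h1 : I ∪ (A ∪ C) = A ∪ I ∪ C := by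
    ext x; simp only [Finset.mem_union]; tauto
  rw [h1] at hle
  unfold Hc at hI
  have hmono := Hm_mono p hp (show A ∪ C ⊆ A ∪ I ∪ C by
    intro x hx; simp only [Finset.mem_union] at hx ⊢; tauto)
  linarith

lemma Hc_sdiff (hp : FiniteEntropy p) {I C : Finset (Fin n)} (hI : Hc p I C = 0)
    (Q : Finset (Fin n)) : Hc p (Q \ I) C = Hc p Q C := by
  unfold Hc
  have key : Hm p (Q ∪ C) = Hm p ((Q \ I) ∪ C) := by
    have h1 := Hm_erase p hp hI (Q \ I)
    have hsub1 : Q ∪ C ⊆ (Q \ I) ∪ I ∪ C := by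
      intro x hx; simp only [Finset.mem_union, Finset.mem_sdiff] at hx ⊢; tauto
    have hsub2 : (Q \ I) ∪ C ⊆ Q ∪ C := by
      intro x hx; simp only [Finset.mem_union, Finset.mem_sdiff] at hx ⊢; tauto
    have m1 := Hm_mono p hp hsub1
    have m2 := Hm_mono p hp hsub2
    linarith
  rw [key]

lemma sup_map_sdiff (Qs : Multiset (Finset (Fin n))) (I : Finset (Fin n)) :
    (Qs.map (fun Q => Q \ I)).sup = Qs.sup \ I := by
  induction Qs using Multiset.induction_on with
  | empty => simp
  | cons Q Qs ih =>
      rw [Multiset.map_cons, Multiset.sup_cons, Multiset.sup_cons, ih]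
      exact (Finset.union_sdiff_distrib _ _ _).symm

lemma J_sdiff (hp : FiniteEntropy p) {I C : Finset (Fin n)} (hI : Hc p I C = 0)
    (Qs : Multiset (Finset (Fin n))) : J p C (Qs.map (fun Q => Q \ I)) = J p C Qs := by
  unfold J
  rw [Multiset.map_map, sup_map_sdiff, Hc_sdiff p hp hI]
  congr 2
  exact Multiset.map_congr rfl (fun Q _ => Hc_sdiff p hp hI Q)

lemma J_cons_empty (C : Finset (Fin n)) (Qs : Multiset (Finset (Fin n))) :
    J p C (∅ ::ₘ Qs) = J p C Qs := by
  rw [J_cons, Hc_empty]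
  have : (∅ : Finset (Fin n)) ∪ Qs.sup = Qs.sup := Finset.empty_union _
  rw [this]
  ring

lemma J_filter_ne (C : Finset (Fin n)) (Qs : Multiset (Finset (Fin n))) :
    J p C (Qs.filter (fun Q => Q ≠ ∅)) = J p C Qs := by
  conv_rhs => rw [← Multiset.filter_add_not (fun Q => Q ≠ ∅) Qs]
  set A := Qs.filter (fun Q => Q ≠ ∅)
  set B := Qs.filter (fun Q => ¬ Q ≠ ∅)
  have hB : ∀ Q ∈ B, Q = ∅ := by
    intro Q hQ
    have := (Multiset.mem_filter.1 hQ).2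
    simpa using this
  clear_value B
  induction B using Multiset.induction_on with
  | empty => simp
  | cons Q B ih =>
      have hQ : Q = ∅ := hB Q (Multiset.mem_cons_self Q B)
      have : A + Q ::ₘ B = Q ::ₘ (A + B) := by
        rw [Multiset.add_cons]
      rw [this, hQ, J_cons_empty]
      exact ih (fun R hR => hB R (Multiset.mem_cons_of_mem hR))

end PaperLayer3

lemma exists_two {α : Type*} {m : Multiset α} (h : 2 ≤ Multiset.card m) :
    ∃ a b t, m = a ::ₘ b ::ₘ t := by
  obtain ⟨a, ha⟩ := Multiset.card_pos_iff_exists_mem.1 (lt_of_lt_of_le two_pos h)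
  obtain ⟨m', rfl⟩ := Multiset.exists_cons_of_mem ha
  rw [Multiset.card_cons] at h
  obtain ⟨b, hb⟩ := Multiset.card_pos_iff_exists_mem.1 (show 0 < Multiset.card m' by omega)
  obtain ⟨m'', rfl⟩ := Multiset.exists_cons_of_mem hb
  exact ⟨a, b, m'', rfl⟩

lemma repSet_two {K : CMI n} {q : Fin n} (hq : q ∈ repSet K) :
    ∃ Q1 Q2 rest, K.Qs = Q1 ::ₘ Q2 ::ₘ rest ∧ q ∈ Q1 ∧ q ∈ Q2 := by
  have h2 : 2 ≤ Multiset.card (K.Qs.filter (fun Q => q ∈ Q)) :=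
    (Finset.mem_filter.1 hq).2
  obtain ⟨Q1, Q2, t, ht⟩ := exists_two h2
  have hle : (K.Qs.filter (fun Q => q ∈ Q)) ≤ K.Qs := Multiset.filter_le _ _
  rw [ht] at hle
  obtain ⟨u, hu⟩ := Multiset.le_iff_exists_add.1 hle
  have h1 : q ∈ Q1 := by
    have : Q1 ∈ K.Qs.filter (fun Q => q ∈ Q) := by
      rw [ht]; exact Multiset.mem_cons_self _ _
    exact (Multiset.mem_filter.1 this).2
  have hQ2 : q ∈ Q2 := by
    have : Q2 ∈ K.Qs.filter (fun Q => q ∈ Q) := by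
      rw [ht]; exact Multiset.mem_cons_of_mem (Multiset.mem_cons_self _ _)
    exact (Multiset.mem_filter.1 this).2
  refine ⟨Q1, Q2, t + u, ?_, h1, hQ2⟩
  rw [hu]
  simp [Multiset.cons_add]

lemma parts_map_sdiff (K : CMI n) :
    (parts K).map (fun P => P \ repSet K) = parts K := by
  apply Multiset.map_congr rfl ?_ |>.trans (Multiset.map_id _)
  intro P hP
  obtain ⟨Q, _, rfl⟩ := Multiset.mem_map.1 (Multiset.mem_filter.1 hP).1
  simp [sdiff_idem]

lemma J_parts (p : PMF (Fin n → ℕ)) (hp : FiniteEntropy p) (K : CMI n)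
    (hI : Hc p (repSet K) K.C = 0) : J p K.C (parts K) = J p K.C K.Qs := by
  unfold parts
  rw [J_filter_ne, J_sdiff p hp hI]

/-- every pure-form CMI is equivalent to its canonical form. -/
theorem stmt5 {n : ℕ} (K : CMI n) (hpure : IsPure K) : Equivalent K (can K) := by
  intro p hp
  by_cases hk : Multiset.card K.Qs ≤ 1
  · rw [can, if_pos hk]
    constructor
    · intro _; exact J_zero_of_card_le_one p (by simp)
    · intro _; exact J_zero_of_card_le_one p hk
  -- main equivalence
  have hmain : Valid p K ↔ (Hc p (repSet K) K.C = 0 ∧ J p K.C (parts K) = 0) := by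
    constructor
    · intro hv
      have hI : Hc p (repSet K) K.C = 0 := by
        apply Hc_finset_zero p hp
        intro q hq
        obtain ⟨Q1, Q2, rest, hKQ, h1, h2⟩ := repSet_two hq
        have hv' : J p K.C (Q1 ::ₘ Q2 ::ₘ rest) = 0 := by rw [← hKQ]; exact hv
        exact two_entry_zero p hp h1 h2 hv'
      exact ⟨hI, by rw [J_parts p hp K hI]; exact hv⟩
    · rintro ⟨hI, hJ⟩
      have := J_parts p hp K hI
      unfold Valid
      rw [← this]
      exact hJ
  by_cases hrep : repSet K = ∅
  · rw [can, if_neg hk, if_pos hrep]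
    rw [hmain]
    unfold Valid
    simp only
    constructor
    · exact fun h => h.2
    · intro h
      exact ⟨by rw [hrep]; exact Hc_empty p K.C, h⟩
  · -- repSet K ≠ ∅
    have hJred : Hc p (repSet K) K.C = 0 →
        J p K.C (repSet K ::ₘ repSet K ::ₘ parts K) = J p K.C (parts K) := by
      intro hI
      have heq := J_sdiff p hp hI (repSet K ::ₘ repSet K ::ₘ parts K)
      rw [Multiset.map_cons, Multiset.map_cons, Finset.sdiff_self, parts_map_sdiff,
        J_cons_empty, J_cons_empty] at heq
      exact heq.symm
    have hkey : J p K.C (repSet K ::ₘ repSet K ::ₘ parts K) = 0 ↔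
        (Hc p (repSet K) K.C = 0 ∧ J p K.C (parts K) = 0) := by
      constructor
      · intro hv
        have hI : Hc p (repSet K) K.C = 0 := by
          apply Hc_finset_zero p hp
          intro q hq
          exact two_entry_zero p hp hq hq hv
        exact ⟨hI, by rw [← hJred hI]; exact hv⟩
      · rintro ⟨hI, hJ⟩
        rw [hJred hI]
        exact hJ
    by_cases hp1 : Multiset.card (parts K) ≤ 1
    · rw [can, if_neg hk, if_neg hrep, if_pos hp1]
      rw [hmain]
      unfold Valid
      simp only
      have h2 : ({repSet K, repSet K} : Multiset (Finset (Fin n)))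
          = repSet K ::ₘ repSet K ::ₘ 0 := rfl
      rw [h2, J_pair, Finset.union_self]
      constructor
      · intro h
        rw [h.1]; ring
      · intro h
        refine ⟨by linarith, J_zero_of_card_le_one p hp1⟩
    · rw [can, if_neg hk, if_neg hrep, if_neg hp1]
      rw [hmain]
      unfold Valid
      simp only
      rw [hkey]

end Paper
end

section
/- Let K and K' be pure-form CMIs with can(K) = (C, ⟨𝕀_K, 𝕀_K, P_1,…,P_t⟩) and can(K') = (C', ⟨𝕀_{K'}, 𝕀_{K'}, P'_1,…,P'_s⟩) (general notation), and set P = ∪_{i=1}^t P_i and P' = ∪_{j=1}^s P'_j. If K ∼ K', then 𝕀_K ∩ P' = ∅ and 𝕀_{K'} ∩ P = ∅. -/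
open scoped Classical

namespace Paper

variable {n : ℕ}

section Aux
open scoped ENNReal



lemma tsum_inj {β : Type} (f : Bool → β) (hf : f false ≠ f true) :
    ∑' y, Real.negMulLog (((PMF.uniformOfFintype Bool).map f) y).toReal = Real.log 2 := by
  classical
  have hval : ∀ b, ((PMF.uniformOfFintype Bool).map f) (f b) = 2⁻¹ := by
    intro b
    rw [PMF.map_apply, tsum_bool]
    cases b <;> simp [PMF.uniformOfFintype_apply, hf, Ne.symm hf]
  have hzero : ∀ y ∉ ({f false, f true} : Finset β),
      Real.negMulLog (((PMF.uniformOfFintype Bool).map f) y).toReal = 0 := by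
    intro y hy
    simp only [Finset.mem_insert, Finset.mem_singleton, not_or] at hy
    rw [PMF.map_apply, tsum_bool]
    simp [hy.1, hy.2, Real.negMulLog_zero]
  rw [tsum_eq_sum hzero, Finset.sum_pair hf, hval false, hval true]
  have h2 : ((2⁻¹ : ℝ≥0∞)).toReal = (2⁻¹ : ℝ) := by simp
  rw [h2]
  simp [Real.negMulLog, Real.log_inv]
  ring

lemma tsum_const {β : Type} (f : Bool → β) (hc : f false = f true) :
    ∑' y, Real.negMulLog (((PMF.uniformOfFintype Bool).map f) y).toReal = 0 := by
  classical
  have hzero : ∀ y ∉ ({f true} : Finset β),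
      Real.negMulLog (((PMF.uniformOfFintype Bool).map f) y).toReal = 0 := by
    intro y hy
    simp only [Finset.mem_singleton] at hy
    rw [PMF.map_apply, tsum_bool]
    simp [hy, hc ▸ hy, Real.negMulLog_zero]
  rw [tsum_eq_sum hzero, Finset.sum_singleton]
  rw [PMF.map_apply, tsum_bool]
  simp [hc, PMF.uniformOfFintype_apply, ENNReal.inv_two_add_inv_two]


/-- The distribution where `X_q` is a fair bit and all other coordinates are `0`. -/
noncomputable def pq (q : Fin n) : PMF (Fin n → ℕ) :=
  (PMF.uniformOfFintype Bool).map fun b i => if i = q then (if b then 1 else 0) else 0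

lemma Hm_pq (q : Fin n) (α : Finset (Fin n)) :
    Hm (pq q) α = if q ∈ α then Real.log 2 else 0 := by
  have hmar : marginal (pq q) α = (PMF.uniformOfFintype Bool).map
      (fun b (i : {i // i ∈ α}) => if i.1 = q then (if b then 1 else 0) else 0) := by
    unfold marginal pq
    rw [PMF.map_comp]
    rfl
  unfold Hm
  rw [hmar]
  by_cases hq : q ∈ α
  · rw [if_pos hq]
    apply tsum_inj
    intro hcontra
    have := congrFun hcontra ⟨q, hq⟩
    simp at this
  · rw [if_neg hq]
    apply tsum_const
    funext i
    have : i.1 ≠ q := fun e => hq (e ▸ i.2)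
    simp [this]

lemma Hc_pq (q : Fin n) (β C : Finset (Fin n)) (hq : q ∉ C) :
    Hc (pq q) β C = if q ∈ β then Real.log 2 else 0 := by
  unfold Hc
  rw [Hm_pq, Hm_pq]
  by_cases h : q ∈ β <;> simp [h, Finset.mem_union, hq]

lemma fe_pq (q : Fin n) : FiniteEntropy (pq q) := by
  intro i
  apply summable_of_ne_finset_zero (s := ({0, 1} : Finset ℕ))
  intro y hy
  simp only [Finset.mem_insert, Finset.mem_singleton, not_or] at hy
  have hm : (pq q).map (fun x => x i)
      = (PMF.uniformOfFintype Bool).map (fun b => if i = q then (if b then 1 else 0) else 0) := by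
    unfold pq
    rw [PMF.map_comp]
    rfl
  rw [hm, PMF.map_apply, tsum_bool]
  by_cases hiq : i = q <;> simp [hiq, hy.1, hy.2, Real.negMulLog_zero]

lemma sum_ite_log (q : Fin n) (Qs : Multiset (Finset (Fin n))) :
    ((Qs.map fun Q => if q ∈ Q then Real.log 2 else 0).sum)
      = (Multiset.card (Qs.filter fun Q => q ∈ Q)) * Real.log 2 := by
  induction Qs using Multiset.induction with
  | empty => simp
  | cons a s ih =>
    rw [Multiset.map_cons, Multiset.sum_cons, ih, Multiset.filter_cons]
    by_cases h : q ∈ a <;> simp [h] <;> push_cast <;> ring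

lemma mem_msup_iff (q : Fin n) (Qs : Multiset (Finset (Fin n))) :
    q ∈ Qs.sup ↔ ∃ Q ∈ Qs, q ∈ Q := by
  induction Qs using Multiset.induction with
  | empty => simp [Multiset.sup_zero]
  | cons a s ih =>
    simp [Multiset.sup_cons, Finset.sup_eq_union, Finset.mem_union, ih]

lemma valid_pq (q : Fin n) (K : CMI n) (hq : q ∉ K.C) :
    Valid (pq q) K ↔ Multiset.card (K.Qs.filter fun Q => q ∈ Q) ≤ 1 := by
  have hL : (0:ℝ) < Real.log 2 := Real.log_pos (by norm_num)
  unfold Valid J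
  have hmap : (K.Qs.map fun Q => Hc (pq q) Q K.C)
      = K.Qs.map fun Q => if q ∈ Q then Real.log 2 else 0 :=
    Multiset.map_congr rfl fun Q _ => Hc_pq q Q K.C hq
  rw [hmap, sum_ite_log, Hc_pq q _ _ hq]
  set m := Multiset.card (K.Qs.filter fun Q => q ∈ Q) with hm
  by_cases hsup : q ∈ K.Qs.sup
  · rw [if_pos hsup]
    constructor
    · intro h0
      have : (m : ℝ) = 1 := by
        have : (m : ℝ) * Real.log 2 = 1 * Real.log 2 := by linarith
        exact mul_right_cancel₀ (ne_of_gt hL) this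
      exact_mod_cast le_of_eq this
    · intro hm1
      obtain ⟨Q, hQ, hqQ⟩ := (mem_msup_iff q K.Qs).1 hsup
      have h1m : 1 ≤ m := by
        rw [hm]
        have : Q ∈ K.Qs.filter fun Q => q ∈ Q := Multiset.mem_filter.2 ⟨hQ, hqQ⟩
        exact Multiset.card_pos_iff_exists_mem.2 ⟨Q, this⟩
      have : m = 1 := le_antisymm hm1 h1m
      rw [this]
      ring
  · rw [if_neg hsup]
    have hm0 : m = 0 := by
      rw [hm, Multiset.card_eq_zero, Multiset.filter_eq_nil]
      intro Q hQ hqQ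
      exact hsup ((mem_msup_iff q K.Qs).2 ⟨Q, hQ, hqQ⟩)
    rw [hm0]
    simp

lemma aux_main (K K' : CMI n) (hK : IsPure K) (hK' : IsPure K')
    (h : Equivalent K K') : repSet K ∩ (canParts K').sup = ∅ := by
  rw [Finset.eq_empty_iff_forall_notMem]
  intro q hq
  rw [Finset.mem_inter] at hq
  have h2 : 2 ≤ Multiset.card (K.Qs.filter fun Q => q ∈ Q) := by
    have := hq.1
    rw [repSet, Finset.mem_filter] at this
    exact this.2
  -- q is in some Q₀ ∈ K.Qs, hence q ∉ K.C
  obtain ⟨Q₀, hQ₀⟩ := Multiset.card_pos_iff_exists_mem.1 (by omega :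
    0 < Multiset.card (K.Qs.filter fun Q => q ∈ Q))
  rw [Multiset.mem_filter] at hQ₀
  have hqC : q ∉ K.C := by
    intro hc
    have := (hK Q₀ hQ₀.1).2
    rw [Finset.eq_empty_iff_forall_notMem] at this
    exact this q (Finset.mem_inter.2 ⟨hQ₀.2, hc⟩)
  -- from hq.2 : q in some P ∈ canParts K' ⊆ parts K'
  obtain ⟨P, hP, hqP⟩ := (mem_msup_iff q _).1 hq.2
  have hPparts : P ∈ parts K' := by
    unfold canParts at hP
    split_ifs at hP with h1 h2'
    · exact absurd hP (Multiset.notMem_zero P)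
    · exact absurd hP (Multiset.notMem_zero P)
    · exact hP
  rw [parts, Multiset.mem_filter, Multiset.mem_map] at hPparts
  obtain ⟨⟨Q, hQ, hQP⟩, -⟩ := hPparts
  rw [← hQP, Finset.mem_sdiff] at hqP
  have hqC' : q ∉ K'.C := by
    intro hc
    have := (hK' Q hQ).2
    rw [Finset.eq_empty_iff_forall_notMem] at this
    exact this q (Finset.mem_inter.2 ⟨hqP.1, hc⟩)
  have hrep' : Multiset.card (K'.Qs.filter fun Q => q ∈ Q) ≤ 1 := by
    have := hqP.2
    rw [repSet, Finset.mem_filter] at this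
    push_neg at this
    have := this (Finset.mem_univ q)
    omega
  have hiff := h (pq q) (fe_pq q)
  have hvK' : Valid (pq q) K' := (valid_pq q K' hqC').2 hrep'
  have hvK : Valid (pq q) K := hiff.2 hvK'
  have := (valid_pq q K hqC).1 hvK
  omega

end Aux

/-- for pure-form `K ∼ K'`, the repeated-index set of each is disjoint
from the union `P'` (resp. `P`) of the `P`-entries of the other's canonical form. -/
theorem stmt7 {n : ℕ} (K K' : CMI n) (hK : IsPure K) (hK' : IsPure K')
    (h : Equivalent K K') :
    repSet K ∩ (canParts K').sup = ∅ ∧ repSet K' ∩ (canParts K).sup = ∅ :=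
  ⟨aux_main K K' hK hK' h, aux_main K' K hK' hK fun p hp => (h p hp).symm⟩

end Paper
end
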